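/- arXiv:2110.13108 — 2 statements merged into one kernel-verified Lean document; each statement's English description precedes it below -/
import Mathlib

section
/- (Proposition 3) Let M₀ be a commutative von Neumann algebra. Then a projection P ∈ M₂(M₀) is a strict projection if and only if there exists a strict unitary U = [[u₁, u₂],[u₃, u₄]] ∈ M₂(M₀) such that P = [[u₁*u₁, u₁*u₂],[u₂*u₁, u₂*u₂]] and I₂ − P = [[u₃*u₃, u₃*u₄],[u₄*u₃, u₄*u₄]], where I₂ is the identity of M₂(M₀). -/
/-- A projection: `p = p* = p²`. -/
def IsProj {L : Type*} [Mul L] [Star L] (p : L) : Prop := star p = p ∧ p * p = p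

variable {K : Type} [NormedAddCommGroup K] [InnerProductSpace ℂ K] [CompleteSpace K]

/-- An element `a` of a von Neumann algebra `M₀` (with `0 ≤ a ≤ 1`) is strict in `M₀` if the
only projection of `M₀` below `a` is `0` and the only projection of `M₀` annihilating `a`
is `0`. -/
def StrictIn (M₀ : VonNeumannAlgebra K) (a : K →L[ℂ] K) : Prop :=
  (∀ p ∈ M₀, IsProj p → p ≤ a → p = 0) ∧ (∀ p ∈ M₀, IsProj p → p * a = 0 → p = 0)

/-- A strict positive element: `0 ≤ a ≤ 1` and `a` is strict in `M₀`. -/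
def StrictPos (M₀ : VonNeumannAlgebra K) (a : K →L[ℂ] K) : Prop :=
  0 ≤ a ∧ a ≤ 1 ∧ StrictIn M₀ a

/-- A general element `x ∈ M₀` is strict if `|x| = √(x* x)` is a strict positive element. -/
noncomputable def StrictElem (M₀ : VonNeumannAlgebra K) (x : K →L[ℂ] K) : Prop :=
  x ∈ M₀ ∧ StrictPos M₀ (CFC.sqrt (star x * x))

/-- `X` is an element of `M₂(M₀)`: all its entries lie in `M₀`. -/
def MemMat (M₀ : VonNeumannAlgebra K) (X : Matrix (Fin 2) (Fin 2) (K →L[ℂ] K)) : Prop :=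
  ∀ i j, X i j ∈ M₀

/-- The Loewner order on `M₂(B(K)) ≅ B(K ⊕ K)`: `X ≤ Y` iff `Y - X` is positive, i.e.
`Y - X = Z* Z` for some `Z`. -/
def MatLE (X Y : Matrix (Fin 2) (Fin 2) (K →L[ℂ] K)) : Prop :=
  ∃ Z : Matrix (Fin 2) (Fin 2) (K →L[ℂ] K), Y - X = star Z * Z

/-- A strict projection in `M₂(M₀)`: a projection `P = [[p₁, p],[p*, p₂]]` with entries in
`M₀`, `p₁` a strict positive element of `M₀` and `p₁ + p₂ = 1`. -/
def IsStrictProjMat (M₀ : VonNeumannAlgebra K)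
    (P : Matrix (Fin 2) (Fin 2) (K →L[ℂ] K)) : Prop :=
  MemMat M₀ P ∧ IsProj P ∧ StrictPos M₀ (P 0 0) ∧ P 0 0 + P 1 1 = 1

/-- A strict unitary in `M₂(M₀)`: a unitary all of whose entries are strict elements of `M₀`. -/
noncomputable def IsStrictUnitaryMat (M₀ : VonNeumannAlgebra K)
    (U : Matrix (Fin 2) (Fin 2) (K →L[ℂ] K)) : Prop :=
  MemMat M₀ U ∧ star U * U = 1 ∧ U * star U = 1 ∧ ∀ i j, StrictElem M₀ (U i j)

/-!
Write `P = [[a, p], [p*, 1 - a]]`. Since `P² = P` and `M₀` is commutative,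
`p* p = a (1 - a) = c²` with `c = √a √(1 - a)`. Strictness of `a` (hence of `1 - a`) kills the
kernel projections of `a` and `1 - a`, which lie in `M₀`; so `c` is injective with dense range,
and `p = v c` for a unitary `v ∈ M₀` (the extension of `c x ↦ p x`, which is isometric).
The unitary `U = [[√a, v √(1 - a)], [√(1 - a), -v √a]]` then has the required rows, and its
entries are strict because their moduli are `√a` and `√(1 - a)`.
Conversely `P₀₀ = |u₁|²` is strict because `|u₁|` is, and `P₀₀ + P₁₁ = 1` is the `(0, 0)` entry
of `U U* = 1`.
-/

theorem IsSelfAdjoint.mul_eq_zero_comm {R : Type*} [Semiring R] [StarRing R] {a b : R}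
    (ha : IsSelfAdjoint a) (hb : IsSelfAdjoint b) : a * b = 0 ↔ b * a = 0 := by
  rw [← star_eq_zero, star_mul, ha.star_eq, hb.star_eq]

theorem isProj_iff_isStarProjection {L : Type*} [Mul L] [Star L] {p : L} :
    IsProj p ↔ IsStarProjection p :=
  ⟨fun h => ⟨h.2, h.1⟩, fun h => ⟨h.2, h.1⟩⟩

section CStarAlgebra

variable {A : Type*} [CStarAlgebra A] [PartialOrder A] [StarOrderedRing A]

theorem Commute.sqrt_right {a b : A} (h : Commute a b) : Commute a (CFC.sqrt b) := by
  rw [CFC.sqrt_eq_cfc]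
  exact (h.symm.cfc_nnreal _).symm

theorem CFC.sqrt_le_one {a : A} (ha : a ≤ 1) : CFC.sqrt a ≤ 1 :=
  CFC.sqrt_one (A := A) ▸ CFC.sqrt_le_sqrt a 1 ha

theorem mul_self_le_self {a : A} (h₀ : 0 ≤ a) (h₁ : a ≤ 1) : a * a ≤ a := by
  simpa [sq] using CStarAlgebra.pow_antitone h₀ h₁ (show 1 ≤ 2 by norm_num)

namespace IsStarProjection

variable {q a : A}

theorem mul_eq_self_of_le (hq : IsStarProjection q) (ha : a ≤ 1) (hqa : q ≤ a) :
    a * q = q := by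
  have h := (hq.one_sub.mul_right_and_mul_left_of_nonneg_of_le (sub_nonneg.2 ha)
    (sub_le_sub_left hqa 1)).1
  rw [mul_sub, mul_one, sub_mul, one_mul, sub_eq_self, sub_eq_zero] at h
  exact h.symm

theorem le_of_mul_eq_self (hq : IsStarProjection q) (ha : 0 ≤ a) (h : a * q = q) : q ≤ a := by
  have h' : q * a = q := by
    simpa [hq.isSelfAdjoint.star_eq, ha.isSelfAdjoint.star_eq] using congr(star $h)
  rw [← sub_nonneg]
  convert star_left_conjugate_nonneg ha (1 - q) using 1
  simp only [star_sub, star_one, hq.isSelfAdjoint.star_eq, sub_mul, mul_sub, one_mul, mul_one, h,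
    h', hq.isIdempotentElem.eq]
  abel

theorem le_iff_mul_eq_self (hq : IsStarProjection q) (h₀ : 0 ≤ a) (h₁ : a ≤ 1) :
    q ≤ a ↔ a * q = q :=
  ⟨hq.mul_eq_self_of_le h₁, hq.le_of_mul_eq_self h₀⟩

end IsStarProjection

end CStarAlgebra

namespace ContinuousLinearMap

variable {R M : Type*} [Semiring R] [AddCommMonoid M] [TopologicalSpace M] [Module R M]
  {a b c : M →L[R] M}

theorem mul_left_cancel_of_injective (hc : Function.Injective c) (h : c * a = c * b) : a = b :=
  ext fun x => hc congr($h x)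

theorem mul_right_cancel_of_denseRange [T2Space M] (hc : DenseRange c) (h : a * c = b * c) :
    a = b :=
  DFunLike.coe_injective <| hc.equalizer a.continuous b.continuous congr(⇑$h)

end ContinuousLinearMap

section HilbertSpace

variable {𝕜 E : Type*} [RCLike 𝕜] [NormedAddCommGroup E] [InnerProductSpace 𝕜 E] [CompleteSpace E]

theorem ContinuousLinearMap.norm_apply_eq_of_star_mul_self_eq {a b : E →L[𝕜] E}
    (h : star a * a = star b * b) (x : E) : ‖a x‖ = ‖b x‖ := by
  have key (T : E →L[𝕜] E) : ‖T x‖ ^ 2 = RCLike.re (inner 𝕜 ((star T * T) x) x) := by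
    rw [star_eq_adjoint]
    exact T.apply_norm_sq_eq_inner_adjoint_left x
  have := key a
  rw [h, ← key b] at this
  exact (sq_eq_sq₀ (norm_nonneg _) (norm_nonneg _)).1 this

theorem IsStarNormal.denseRange_of_injective {T : E →L[𝕜] E} (hT : IsStarNormal T)
    (hinj : Function.Injective T) : DenseRange T := by
  have : T.rangeᗮ = ⊥ := by
    rw [ContinuousLinearMap.IsStarNormal.orthogonal_range hT, LinearMap.ker_eq_bot]
    exact hinj
  rw [DenseRange, ← ContinuousLinearMap.coe_coe, ← LinearMap.coe_range]
  exact Submodule.dense_iff_topologicalClosure_eq_top.2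
    (Submodule.topologicalClosure_eq_top_iff.2 this)

end HilbertSpace

namespace VonNeumannAlgebra

variable (M₀ : VonNeumannAlgebra K)

theorem mem_of_forall_commute {z : K →L[ℂ] K} (h : ∀ y ∈ M₀.commutant, Commute y z) : z ∈ M₀ :=
  M₀.commutant_commutant ▸ mem_commutant_iff.2 h

theorem sqrt_mem {a : K →L[ℂ] K} (ha : a ∈ M₀) : CFC.sqrt a ∈ M₀ :=
  M₀.mem_of_forall_commute fun _ hy => Commute.sqrt_right (mem_commutant_iff.1 hy a ha).symm

open ContinuousLinearMap in
theorem exists_unitary_mul_eq {p c : K →L[ℂ] K} (hp : p ∈ M₀) (hc : c ∈ M₀)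
    (hpn : IsStarNormal p) (hcsa : IsSelfAdjoint c) (hinj : Function.Injective c)
    (h : star p * p = c * c) : ∃ v ∈ M₀, v ∈ unitary (K →L[ℂ] K) ∧ v * c = p := by
  have hnorm : ∀ x, ‖p x‖ = ‖c x‖ := norm_apply_eq_of_star_mul_self_eq (by rwa [hcsa.star_eq])
  have hcd : DenseRange c := hcsa.isStarNormal.denseRange_of_injective hinj
  have hpd : DenseRange p := hpn.denseRange_of_injective <| (injective_iff_map_eq_zero p).2
    fun x hx => (injective_iff_map_eq_zero c).1 hinj x <| by
      rw [← norm_eq_zero, ← hnorm, hx, norm_zero]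
  obtain ⟨v, hv⟩ : ∃ v : K →L[ℂ] K, v * c = p :=
    ⟨(p : K →ₗ[ℂ] K).extendOfNorm c, ContinuousLinearMap.ext <|
      LinearMap.extendOfNorm_eq (f := (p : K →ₗ[ℂ] K)) hcd ⟨1, fun x => by simp [hnorm]⟩⟩
  have hvv : star v * v = 1 := by
    refine mul_right_cancel_of_denseRange hcd (mul_left_cancel_of_injective hinj ?_)
    calc c * (star v * v * c) = star (v * c) * (v * c) := by
          rw [star_mul, hcsa.star_eq]; noncomm_ring
      _ = c * (1 * c) := by rw [hv, h, one_mul]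
  refine ⟨v, M₀.mem_of_forall_commute fun y hy => ?_, Unitary.mem_iff.2 ⟨hvv, ?_⟩, hv⟩
  · have hyp : y * p = p * y := (mem_commutant_iff.1 hy p hp).symm
    have hyc : y * c = c * y := (mem_commutant_iff.1 hy c hc).symm
    refine mul_right_cancel_of_denseRange hcd ?_
    calc y * v * c = p * y := by rw [mul_assoc, hv, hyp]
      _ = v * y * c := by rw [mul_assoc, hyc, ← mul_assoc, hv]
  · refine mul_right_cancel_of_denseRange hpd ?_
    calc v * star v * p = v * (star v * v) * c := by rw [← hv]; noncomm_ring
      _ = 1 * p := by rw [hvv, mul_one, hv, one_mul]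

abbrev commRingOfComm (hcomm : ∀ x ∈ M₀, ∀ y ∈ M₀, x * y = y * x) : CommRing M₀ :=
  { SubringClass.toRing M₀ with mul_comm := fun x y => Subtype.ext (hcomm x x.2 y y.2) }

end VonNeumannAlgebra

namespace StrictPos

variable {M₀ : VonNeumannAlgebra K} {a : K →L[ℂ] K}

theorem one_sub (h : StrictPos M₀ a) : StrictPos M₀ (1 - a) := by
  obtain ⟨h₀, h₁, hle, hmul⟩ := h
  have h₀' : 0 ≤ 1 - a := sub_nonneg.2 h₁
  have h₁' : 1 - a ≤ 1 := sub_le_self 1 h₀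
  refine ⟨h₀', h₁', fun q hqm hq hqa => hmul q hqm hq ?_, fun q hqm hq hqa => hle q hqm hq ?_⟩
  · have hq := isProj_iff_isStarProjection.1 hq
    rw [hq.le_iff_mul_eq_self h₀' h₁', sub_mul, one_mul, sub_eq_self] at hqa
    exact (h₀.isSelfAdjoint.mul_eq_zero_comm hq.isSelfAdjoint).1 hqa
  · have hq := isProj_iff_isStarProjection.1 hq
    rw [mul_sub, mul_one, sub_eq_zero] at hqa
    rw [hq.le_iff_mul_eq_self h₀ h₁]
    simpa [hq.isSelfAdjoint.star_eq, h₀.isSelfAdjoint.star_eq] using congr(star $hqa).symm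

theorem sqrt (h : StrictPos M₀ a) : StrictPos M₀ (CFC.sqrt a) := by
  obtain ⟨h₀, h₁, hle, hmul⟩ := h
  have hs : CFC.sqrt a * CFC.sqrt a = a := CFC.sqrt_mul_sqrt_self a h₀
  refine ⟨CFC.sqrt_nonneg a, CFC.sqrt_le_one h₁, fun q hqm hq hqs => hle q hqm hq ?_,
    fun q hqm hq hqs => hmul q hqm hq ?_⟩
  · have hq := isProj_iff_isStarProjection.1 hq
    rw [hq.le_iff_mul_eq_self (CFC.sqrt_nonneg a) (CFC.sqrt_le_one h₁)] at hqs
    rw [hq.le_iff_mul_eq_self h₀ h₁, ← hs, mul_assoc, hqs, hqs]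
  · rw [← hs, ← mul_assoc, hqs, zero_mul]

theorem mul_self (h : StrictPos M₀ a) : StrictPos M₀ (a * a) := by
  obtain ⟨h₀, h₁, hle, hmul⟩ := h
  have hsq : a * a ≤ a := mul_self_le_self h₀ h₁
  refine ⟨h₀.isSelfAdjoint.mul_self_nonneg, hsq.trans h₁,
    fun q hqm hq hqa => hle q hqm hq (hqa.trans hsq), fun q hqm hq hqa => hmul q hqm hq ?_⟩
  have hq := isProj_iff_isStarProjection.1 hq
  have haq : star (a * q) * (a * q) = 0 := by
    rw [star_mul, hq.isSelfAdjoint.star_eq, h₀.isSelfAdjoint.star_eq, mul_assoc, ← mul_assoc a,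
      ← mul_assoc, hqa, zero_mul]
  exact (h₀.isSelfAdjoint.mul_eq_zero_comm hq.isSelfAdjoint).1
    (CStarRing.star_mul_self_eq_zero_iff _ |>.1 haq)

theorem injective (h : StrictPos M₀ a) (ha : a ∈ M₀) : Function.Injective a := by
  have : CompleteSpace a.ker := a.isComplete_ker.completeSpace_coe
  set q := a.ker.starProjection
  have hq : IsStarProjection q := isStarProjection_starProjection
  have hqm : q ∈ M₀ := by
    refine (VonNeumannAlgebra.IsStarProjection.mem_iff hq M₀).2 fun y hy x hx => ?_
    rw [Submodule.range_starProjection] at hx ⊢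
    have hya := congr($(VonNeumannAlgebra.mem_commutant_iff.1 hy a ha) x)
    simp only [Submodule.mem_comap, LinearMap.mem_ker, ContinuousLinearMap.coe_coe] at hx hya ⊢
    rw [← mul_apply_eq_comp, hya, mul_apply_eq_comp, hx, map_zero]
  have haq : a * q = 0 := ContinuousLinearMap.ext a.ker.starProjection_apply_mem
  have hq0 : q = 0 := h.2.2.2 q hqm (isProj_iff_isStarProjection.2 hq)
    ((h.1.isSelfAdjoint.mul_eq_zero_comm hq.isSelfAdjoint).1 haq)
  rw [← ContinuousLinearMap.coe_coe, ← LinearMap.ker_eq_bot,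
    ← Submodule.range_starProjection a.ker]
  change LinearMap.range (q : K →ₗ[ℂ] K) = ⊥
  rw [hq0, ContinuousLinearMap.toLinearMap_zero, LinearMap.range_zero]

end StrictPos

theorem Matrix.exists_unitary_of_polar {R : Type*} [CommRing R] [StarRing R] {a p s₁ s₂ v : R}
    (hs₁ : IsSelfAdjoint s₁) (hs₂ : IsSelfAdjoint s₂) (h₁ : s₁ * s₁ = a) (h₂ : s₂ * s₂ = 1 - a)
    (hv : star v * v = 1) (hp : v * (s₁ * s₂) = p) :
    ∃ U ∈ unitary (Matrix (Fin 2) (Fin 2) R),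
      !![a, p; star p, 1 - a] = !![star (U 0 0) * U 0 0, star (U 0 0) * U 0 1;
                                    star (U 0 1) * U 0 0, star (U 0 1) * U 0 1] ∧
      1 - !![a, p; star p, 1 - a] = !![star (U 1 0) * U 1 0, star (U 1 0) * U 1 1;
                                        star (U 1 1) * U 1 0, star (U 1 1) * U 1 1] := by
  subst h₁ hp
  have hU : star !![s₁, v * s₂; s₂, -(v * s₁)] * !![s₁, v * s₂; s₂, -(v * s₁)] = 1 := by
    ext i j
    fin_cases i <;> fin_cases j <;> simp [Matrix.mul_apply, hs₁.star_eq, hs₂.star_eq] <;> grind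
  refine ⟨_, Unitary.mem_iff.2 ⟨hU, mul_eq_one_comm.1 hU⟩, ?_, ?_⟩ <;>
    ext i j <;> fin_cases i <;> fin_cases j <;> simp [hs₁.star_eq, hs₂.star_eq] <;> grind

theorem Matrix.map_mem_unitary {R S n : Type*} [Fintype n] [DecidableEq n] [Semiring R]
    [StarRing R] [Semiring S] [StarRing S] (f : R →+* S) (hf : ∀ x, f (star x) = star (f x))
    {U : Matrix n n R} (hU : U ∈ unitary (Matrix n n R)) : U.map f ∈ unitary (Matrix n n S) := by
  have hstar : star (U.map f) = (star U).map f := by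
    simp only [Matrix.star_eq_conjTranspose, Matrix.conjTranspose_map f hf]
  rw [Unitary.mem_iff, hstar, ← Matrix.map_mul, ← Matrix.map_mul, (Unitary.mem_iff.1 hU).1,
    (Unitary.mem_iff.1 hU).2, Matrix.map_one f (map_zero f) (map_one f)]
  exact ⟨rfl, rfl⟩

namespace IsStrictProjMat

variable {M₀ : VonNeumannAlgebra K} {P : Matrix (Fin 2) (Fin 2) (K →L[ℂ] K)}

theorem apply_one_zero (hP : IsStrictProjMat M₀ P) : P 1 0 = star (P 0 1) := by
  rw [← Matrix.star_apply, hP.2.1.1]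

theorem apply_one_one (hP : IsStrictProjMat M₀ P) : P 1 1 = 1 - P 0 0 :=
  eq_sub_of_add_eq' hP.2.2.2

theorem mul_star_apply_zero_one (hP : IsStrictProjMat M₀ P) :
    P 0 1 * star (P 0 1) = P 0 0 * (1 - P 0 0) := by
  have h := congr($(hP.2.1.2) 0 0)
  rw [Matrix.mul_apply, Fin.sum_univ_two, hP.apply_one_zero] at h
  rw [mul_sub, mul_one]
  exact eq_sub_of_add_eq' h

theorem exists_unitary_mul_sqrt_eq (hcomm : ∀ x ∈ M₀, ∀ y ∈ M₀, x * y = y * x)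
    (hP : IsStrictProjMat M₀ P) :
    ∃ v ∈ M₀, v ∈ unitary (K →L[ℂ] K) ∧
      v * (CFC.sqrt (P 0 0) * CFC.sqrt (1 - P 0 0)) = P 0 1 := by
  have hpp := hP.mul_star_apply_zero_one
  obtain ⟨hmem, -, ha, -⟩ := hP
  have hpm := hmem 0 1
  have hs₁m := M₀.sqrt_mem (hmem 0 0)
  have hs₂m := M₀.sqrt_mem (sub_mem (one_mem M₀) (hmem 0 0))
  have hs : Commute (CFC.sqrt (P 0 0)) (CFC.sqrt (1 - P 0 0)) := hcomm _ hs₁m _ hs₂m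
  refine M₀.exists_unitary_mul_eq hpm (mul_mem hs₁m hs₂m) ⟨hcomm _ (star_mem hpm) _ hpm⟩
    (((CFC.sqrt_nonneg _).isSelfAdjoint.commute_iff (CFC.sqrt_nonneg _).isSelfAdjoint).1 hs)
    ((ha.sqrt.injective hs₁m).comp (ha.one_sub.sqrt.injective hs₂m)) ?_
  calc star (P 0 1) * P 0 1 = P 0 0 * (1 - P 0 0) := by
        rw [← hcomm _ hpm _ (star_mem hpm), hpp]
    _ = _ := by
        rw [mul_assoc, ← mul_assoc (CFC.sqrt (1 - P 0 0)), ← hs.eq, mul_assoc, ← mul_assoc,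
          CFC.sqrt_mul_sqrt_self _ ha.1, CFC.sqrt_mul_sqrt_self _ ha.one_sub.1]

theorem isStrictUnitaryMat_of_eq {U : Matrix (Fin 2) (Fin 2) (K →L[ℂ] K)}
    (hP : IsStrictProjMat M₀ P) (hUm : MemMat M₀ U)
    (hU : U ∈ unitary (Matrix (Fin 2) (Fin 2) (K →L[ℂ] K)))
    (h₀ : P = !![star (U 0 0) * U 0 0, star (U 0 0) * U 0 1;
                 star (U 0 1) * U 0 0, star (U 0 1) * U 0 1])
    (h₁ : 1 - P = !![star (U 1 0) * U 1 0, star (U 1 0) * U 1 1;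
                     star (U 1 1) * U 1 0, star (U 1 1) * U 1 1]) :
    IsStrictUnitaryMat M₀ U := by
  have hdiag : ∀ i j, star (U i j) * U i j = P 0 0 ∨ star (U i j) * U i j = 1 - P 0 0 := by
    intro i j
    fin_cases i <;> fin_cases j
    · exact .inl (by simpa using congr($h₀ 0 0).symm)
    · exact .inr (by simpa [hP.apply_one_one] using congr($h₀ 1 1).symm)
    · exact .inr (by simpa using congr($h₁ 0 0).symm)
    · exact .inl (by simpa [hP.apply_one_one] using congr($h₁ 1 1).symm)
  refine ⟨hUm, hU.1, hU.2, fun i j => ⟨hUm i j, ?_⟩⟩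
  rcases hdiag i j with h | h <;> rw [h]
  exacts [hP.2.2.1.sqrt, hP.2.2.1.one_sub.sqrt]

theorem exists_strictUnitary (hcomm : ∀ x ∈ M₀, ∀ y ∈ M₀, x * y = y * x)
    (hP : IsStrictProjMat M₀ P) :
    ∃ U : Matrix (Fin 2) (Fin 2) (K →L[ℂ] K), IsStrictUnitaryMat M₀ U ∧
        P = !![star (U 0 0) * U 0 0, star (U 0 0) * U 0 1;
               star (U 0 1) * U 0 0, star (U 0 1) * U 0 1] ∧
        1 - P = !![star (U 1 0) * U 1 0, star (U 1 0) * U 1 1;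
                   star (U 1 1) * U 1 0, star (U 1 1) * U 1 1] := by
  obtain ⟨v, hvm, hvu, hv⟩ := hP.exists_unitary_mul_sqrt_eq hcomm
  obtain ⟨ham, hpm, ha⟩ : P 0 0 ∈ M₀ ∧ P 0 1 ∈ M₀ ∧ StrictPos M₀ (P 0 0) :=
    ⟨hP.1 0 0, hP.1 0 1, hP.2.2.1⟩
  -- The unitary is built in the commutative ring `M₀`, then transported to `B(K)` by `ι`.
  let _ : CommRing M₀ := M₀.commRingOfComm hcomm
  let ι : M₀ →+* (K →L[ℂ] K) := SubringClass.subtype M₀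
  obtain ⟨U, hU, h₀, h₁⟩ := Matrix.exists_unitary_of_polar (a := (⟨P 0 0, ham⟩ : M₀))
    (p := ⟨P 0 1, hpm⟩) (s₁ := ⟨_, M₀.sqrt_mem ham⟩)
    (s₂ := ⟨_, M₀.sqrt_mem (sub_mem (one_mem M₀) ham)⟩) (v := ⟨v, hvm⟩)
    (Subtype.ext (CFC.sqrt_nonneg _).isSelfAdjoint) (Subtype.ext (CFC.sqrt_nonneg _).isSelfAdjoint)
    (Subtype.ext (CFC.sqrt_mul_sqrt_self _ ha.1))
    (Subtype.ext (CFC.sqrt_mul_sqrt_self _ ha.one_sub.1)) (Subtype.ext hvu.1) (Subtype.ext hv)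
  have hPι : P = (!![⟨P 0 0, ham⟩, ⟨P 0 1, hpm⟩; star ⟨P 0 1, hpm⟩, 1 - ⟨P 0 0, ham⟩] :
      Matrix (Fin 2) (Fin 2) M₀).map ι := by
    ext i j
    fin_cases i <;> fin_cases j <;> simp [ι, hP.apply_one_zero, hP.apply_one_one]
  refine ⟨U.map ι, hP.isStrictUnitaryMat_of_eq (fun i j => (U i j).2)
    (Matrix.map_mem_unitary ι (fun _ => rfl) hU) ?h₀ ?h₁, ?h₀, ?h₁⟩
  · rw [hPι, h₀]
    ext i j
    fin_cases i <;> fin_cases j <;> simp [ι]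
  · rw [hPι, ← Matrix.map_one ι (map_zero ι) (map_one ι), ← Matrix.map_sub _ (map_sub ι), h₁]
    ext i j
    fin_cases i <;> fin_cases j <;> simp [ι]

end IsStrictProjMat

theorem IsStrictUnitaryMat.isStrictProjMat {M₀ : VonNeumannAlgebra K}
    (hcomm : ∀ x ∈ M₀, ∀ y ∈ M₀, x * y = y * x) {P U : Matrix (Fin 2) (Fin 2) (K →L[ℂ] K)}
    (hU : IsStrictUnitaryMat M₀ U) (hmem : MemMat M₀ P) (hproj : IsProj P)
    (hP : P = !![star (U 0 0) * U 0 0, star (U 0 0) * U 0 1;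
                 star (U 0 1) * U 0 0, star (U 0 1) * U 0 1]) :
    IsStrictProjMat M₀ P := by
  obtain ⟨hUm, -, hUU, hUs⟩ := hU
  have h₀₀ : P 0 0 = star (U 0 0) * U 0 0 := by simpa using congr($hP 0 0)
  have h₁₁ : P 1 1 = star (U 0 1) * U 0 1 := by simpa using congr($hP 1 1)
  have hrow : U 0 0 * star (U 0 0) + U 0 1 * star (U 0 1) = 1 := by
    simpa [Matrix.mul_apply, Fin.sum_univ_two] using congr($hUU 0 0)
  refine ⟨hmem, hproj, ?_, ?_⟩
  · rw [h₀₀, ← CFC.sqrt_mul_sqrt_self (star (U 0 0) * U 0 0)]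
    exact (hUs 0 0).2.mul_self
  · rw [h₀₀, h₁₁, ← hcomm _ (hUm 0 0) _ (star_mem (hUm 0 0)),
      ← hcomm _ (hUm 0 1) _ (star_mem (hUm 0 1))]
    exact hrow

/-- Proposition 3: a projection `P` in `M₂(M₀)` (`M₀` a commutative von Neumann
algebra) is a strict projection iff there is a strict unitary `U = [[u₁,u₂],[u₃,u₄]]` with
`P = [[u₁*u₁, u₁*u₂],[u₂*u₁, u₂*u₂]]` and `I₂ - P = [[u₃*u₃, u₃*u₄],[u₄*u₃, u₄*u₄]]`. -/
theorem statement5 (M₀ : VonNeumannAlgebra K)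
    (hcomm : ∀ x ∈ M₀, ∀ y ∈ M₀, x * y = y * x)
    {P : Matrix (Fin 2) (Fin 2) (K →L[ℂ] K)} (hmem : MemMat M₀ P) (hproj : IsProj P) :
    IsStrictProjMat M₀ P ↔
      ∃ U : Matrix (Fin 2) (Fin 2) (K →L[ℂ] K), IsStrictUnitaryMat M₀ U ∧
        P = !![star (U 0 0) * U 0 0, star (U 0 0) * U 0 1;
               star (U 0 1) * U 0 0, star (U 0 1) * U 0 1] ∧
        1 - P = !![star (U 1 0) * U 1 0, star (U 1 0) * U 1 1;
                   star (U 1 1) * U 1 0, star (U 1 1) * U 1 1] :=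
  ⟨IsStrictProjMat.exists_strictUnitary hcomm,
    fun ⟨_, hU, hP, _⟩ => hU.isStrictProjMat hcomm hmem hproj hP⟩
end

section
/- (Core of Theorem 10) Let M₀ be a commutative von Neumann algebra with unit 1, and let a₀, b₀ be strict positive elements of M₀ such that a₀² + b₀² ≤ 1 and a₀² + b₀² is strict. Put x₀ = a₀² + b₀². Then there exists a strict projection P in M₂(M₀) such that [[a₀², a₀b₀],[a₀b₀, b₀²]] = (x₀ ⊗ I₂)·P; consequently [[a₀², a₀b₀],[a₀b₀, 1 − a₀²]] = ((1 − x₀) ⊗ I₂)·P₀ + (x₀ ⊗ I₂)·P and [[b₀², −a₀b₀],[−a₀b₀, 1 − b₀²]] = ((1 − x₀) ⊗ I₂)·P₀ + (x₀ ⊗ I₂)·(I₂ − P), where P₀ = [[0,0],[0,1]]. -/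
variable {K : Type} [NormedAddCommGroup K] [InnerProductSpace ℂ K] [CompleteSpace K]

/-!
Strictness of `x₀` makes the projection onto its kernel, which lies in `M₀`, vanish; so `x₀` is
injective with dense range. As `a₀², b₀² ≤ x₀` and everything commutes, `a₀²`, `a₀ b₀` and `b₀²`
are dominated by `x₀` pointwise in norm, so they factor through `x₀` inside `M₀`:
`p₁ = a₀² / x₀`, `p = a₀ b₀ / x₀`, `p₂ = b₀² / x₀`. The matrix `P = [[p₁, p], [p, p₂]]` is
`v vᵀ / vᵀ v` for `v = (a₀, b₀)`, hence a projection, and `p₁ + p₂ = 1`. A projection `q ∈ M₀`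
with `q ≤ p₁ = 1 - p₂` kills `p₂`, hence `b₀²` and `b₀`; one with `q p₁ = 0` kills `a₀`. So
strictness of `a₀` and `b₀` passes to `p₁`.
-/

open scoped InnerProductSpace

theorem IsProj.matrix_map {n A B F : Type*} [Fintype n] [NonAssocSemiring A] [StarRing A]
    [NonAssocSemiring B] [StarRing B] [FunLike F A B] [RingHomClass F A B] [StarHomClass F A B]
    {P : Matrix n n A} (hP : IsProj P) (f : F) : IsProj (P.map f) := by
  refine ⟨?_, ?_⟩
  · rw [Matrix.star_eq_conjTranspose, ← Matrix.conjTranspose_map _ (map_star f),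
      ← Matrix.star_eq_conjTranspose, hP.1]
  · rw [← RingHom.coe_coe f, ← Matrix.map_mul, hP.2]

theorem IsProj.diag_nonneg {n A : Type*} [Fintype n] [NonUnitalSemiring A] [PartialOrder A]
    [StarRing A] [StarOrderedRing A] {P : Matrix n n A} (hP : IsProj P) (i : n) :
    0 ≤ P i i := by
  rw [← hP.2, Matrix.mul_apply]
  refine Finset.sum_nonneg fun k _ => ?_
  rw [show P i k = star (P k i) by rw [← Matrix.star_apply, hP.1]]
  exact star_mul_self_nonneg _

theorem IsProj.mul_eq_zero_of_le_one_sub {A : Type*} [Ring A] [PartialOrder A] [StarRing A]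
    [StarOrderedRing A] {q r : A} (hq : IsProj q) (hr : 0 ≤ r) (hqr : Commute q r)
    (hle : q ≤ 1 - r) : q * r = 0 := by
  have hle' := star_left_conjugate_le_conjugate hle q
  rw [hq.1, hq.2, hq.2, mul_sub, mul_one, sub_mul, hq.2, le_sub_self_iff] at hle'
  have hnonneg : 0 ≤ q * r * q := by simpa [hq.1] using star_left_conjugate_nonneg hr q
  calc q * r = q * r * q := by rw [mul_assoc, ← hqr.eq, ← mul_assoc, hq.2]
    _ = 0 := le_antisymm hle' hnonneg

theorem mul_eq_zero_of_mul_mul_self_eq_zero {A : Type*} [NonUnitalNormedRing A] [StarRing A]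
    [CStarRing A] {a q : A} (ha : IsSelfAdjoint a) (h : q * (a * a) = 0) : q * a = 0 :=
  (CStarRing.mul_star_self_eq_zero_iff _).mp <| by
    rw [star_mul, ha.star_eq, ← mul_assoc, mul_assoc q a a, h, zero_mul]

theorem fin_two_decompositions_of_mul_eq {A : Type*} [Ring A] {x a b p₁ p p₂ : A}
    (hxab : x = a * a + b * b) (h₁ : x * p₁ = a * a) (h : x * p = a * b)
    (h₂ : x * p₂ = b * b) :
    !![a * a, a * b; a * b, b * b] = !![x, 0; 0, x] * !![p₁, p; p, p₂] ∧
      !![a * a, a * b; a * b, 1 - a * a]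
        = !![1 - x, 0; 0, 1 - x] * !![(0 : A), 0; 0, 1] + !![x, 0; 0, x] * !![p₁, p; p, p₂] ∧
      !![b * b, -(a * b); -(a * b), 1 - b * b]
        = !![1 - x, 0; 0, 1 - x] * !![(0 : A), 0; 0, 1]
          + !![x, 0; 0, x] * (1 - !![p₁, p; p, p₂]) := by
  subst hxab
  refine ⟨?_, ?_, ?_⟩ <;> ext i j <;> fin_cases i <;> fin_cases j <;>
    simp [Matrix.one_fin_two, h₁, h, h₂, mul_sub] <;> abel

namespace IsLeftRegular

variable {R : Type*} [CommRing R] [StarRing R] {x a b p₁ p p₂ : R}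

theorem isSelfAdjoint_of_mul_eq (hx : IsLeftRegular x) (hsx : IsSelfAdjoint x) {c q : R}
    (hc : IsSelfAdjoint c) (hq : x * q = c) : IsSelfAdjoint q :=
  hx (show x * star q = x * q by rw [hq, ← hc.star_eq, ← hq, star_mul, hsx.star_eq, mul_comm])

theorem isProj_fin_two_of_mul_eq (hx : IsLeftRegular x) (ha : IsSelfAdjoint a)
    (hb : IsSelfAdjoint b) (hxab : x = a * a + b * b) (h₁ : x * p₁ = a * a) (h : x * p = a * b)
    (h₂ : x * p₂ = b * b) : IsProj !![p₁, p; p, p₂] := by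
  have hsx : IsSelfAdjoint x := hxab ▸ (ha.mul ha).add (hb.mul hb)
  have hs₁ := hx.isSelfAdjoint_of_mul_eq hsx (ha.mul ha) h₁
  have hs := hx.isSelfAdjoint_of_mul_eq hsx (ha.mul hb) h
  have hs₂ := hx.isSelfAdjoint_of_mul_eq hsx (hb.mul hb) h₂
  have hx2 : IsLeftRegular (x * x) := hx.mul hx
  have e₁₁ : p₁ * p₁ + p * p = p₁ := hx2 <| by
    linear_combination (x * p₁ + a * a - x) * h₁ + (x * p + a * b) * h - a * a * hxab
  have e₁₂ : p₁ * p + p * p₂ = p := hx2 <| by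
    linear_combination x * p * h₁ + (a * a + x * p₂ - x) * h + a * b * h₂ - a * b * hxab
  have e₂₁ : p * p₁ + p₂ * p = p := hx2 <| by
    linear_combination x * p * h₁ + (a * a + x * p₂ - x) * h + a * b * h₂ - a * b * hxab
  have e₂₂ : p * p + p₂ * p₂ = p₂ := hx2 <| by
    linear_combination (x * p + a * b) * h + (x * p₂ + b * b - x) * h₂ - b * b * hxab
  refine ⟨?_, by rw [Matrix.mul_fin_two, e₁₁, e₁₂, e₂₁, e₂₂]⟩
  ext i j
  fin_cases i <;> fin_cases j <;> simp [Matrix.star_apply, hs₁.star_eq, hs.star_eq, hs₂.star_eq]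

end IsLeftRegular

namespace ContinuousLinearMap

section Normed

variable {𝕜 E : Type*} [NontriviallyNormedField 𝕜] [NormedAddCommGroup E] [NormedSpace 𝕜 E]
  {x : E →L[𝕜] E}

theorem cancel_right_of_denseRange (hx : DenseRange x) {f g : E →L[𝕜] E} (h : f * x = g * x) :
    f = g :=
  coeFn_injective (hx.equalizer f.continuous g.continuous congr(⇑$h))

theorem isLeftRegular_of_ker_eq_bot (hker : x.ker = ⊥) : IsLeftRegular x :=
  fun _ _ h => ext fun ξ => LinearMap.ker_eq_bot.mp hker congr($h ξ)

end Normed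

section Inner

variable {𝕜 E : Type*} [RCLike 𝕜] [NormedAddCommGroup E] [InnerProductSpace 𝕜 E]

theorem re_inner_apply_le_of_le {S T : E →L[𝕜] E} (h : S ≤ T) (ξ : E) :
    RCLike.re ⟪S ξ, ξ⟫_𝕜 ≤ RCLike.re ⟪T ξ, ξ⟫_𝕜 := by
  have := ((le_def S T).mp h).re_inner_nonneg_left ξ
  rwa [sub_apply, inner_sub_left, map_sub, sub_nonneg] at this

variable [CompleteSpace E]

theorem _root_.IsSelfAdjoint.denseRange_of_ker_eq_bot {x : E →L[𝕜] E} (hx : IsSelfAdjoint x)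
    (hker : x.ker = ⊥) : DenseRange x := by
  change Dense (Set.range (x : E →ₗ[𝕜] E))
  rw [← LinearMap.coe_range, Submodule.dense_iff_topologicalClosure_eq_top,
    Submodule.topologicalClosure_eq_top_iff, IsStarNormal.orthogonal_range hx.isStarNormal, hker]

theorem norm_mul_apply_sq_le {u v x : E →L[𝕜] E} (hu : IsSelfAdjoint u) (hv : IsSelfAdjoint v)
    (hvx : Commute v x) (hux : u * u ≤ x) (ξ : E) :
    ‖(u * v) ξ‖ ^ 2 ≤ ‖x ξ‖ * ‖(v * v) ξ‖ := calc
  ‖(u * v) ξ‖ ^ 2 = RCLike.re ⟪(u * u) (v ξ), v ξ⟫_𝕜 := by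
    rw [← inner_self_eq_norm_sq (𝕜 := 𝕜)]
    exact congrArg RCLike.re (hu.isSymmetric (u (v ξ)) (v ξ)).symm
  _ ≤ RCLike.re ⟪x (v ξ), v ξ⟫_𝕜 := re_inner_apply_le_of_le hux _
  _ = RCLike.re ⟪x ξ, (v * v) ξ⟫_𝕜 := by
    rw [← mul_apply_eq_comp x v, ← hvx.eq]
    exact congrArg RCLike.re (hv.isSymmetric (x ξ) (v ξ))
  _ ≤ ‖x ξ‖ * ‖(v * v) ξ‖ := (RCLike.re_le_norm _).trans (norm_inner_le_norm _ _)

theorem norm_mul_self_apply_le {v x : E →L[𝕜] E} (hv : IsSelfAdjoint v) (hvx : Commute v x)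
    (hle : v * v ≤ x) (ξ : E) : ‖(v * v) ξ‖ ≤ ‖x ξ‖ := by
  have := norm_mul_apply_sq_le hv hv hvx hle ξ
  nlinarith [norm_nonneg ((v * v) ξ), norm_nonneg (x ξ)]

theorem norm_mul_apply_le {u v x : E →L[𝕜] E} (hu : IsSelfAdjoint u) (hv : IsSelfAdjoint v)
    (hvx : Commute v x) (hux : u * u ≤ x) (hvx' : v * v ≤ x) (ξ : E) :
    ‖(u * v) ξ‖ ≤ ‖x ξ‖ := by
  have huv := norm_mul_apply_sq_le hu hv hvx hux ξ
  have hvv := norm_mul_self_apply_le hv hvx hvx' ξ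
  nlinarith [norm_nonneg ((u * v) ξ), norm_nonneg (x ξ), norm_nonneg ((v * v) ξ)]

end Inner

end ContinuousLinearMap

namespace VonNeumannAlgebra

open ContinuousLinearMap

variable {M : VonNeumannAlgebra K}

theorem starProjection_ker_mem {x : K →L[ℂ] K} (hx : x ∈ M) : x.ker.starProjection ∈ M := by
  rw [IsStarProjection.mem_iff isStarProjection_starProjection, Submodule.range_starProjection]
  intro y hy ξ hξ
  simp only [Submodule.mem_comap, LinearMap.mem_ker, coe_coe] at hξ ⊢
  rw [← mul_apply_eq_comp, mem_commutant_iff.mp hy x hx, mul_apply_eq_comp, hξ, map_zero]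

theorem ker_eq_bot_of_forall_isProj {x : K →L[ℂ] K} (hxM : x ∈ M) (hx : IsSelfAdjoint x)
    (h : ∀ p ∈ M, IsProj p → p * x = 0 → p = 0) : x.ker = ⊥ := by
  have he : IsStarProjection x.ker.starProjection := isStarProjection_starProjection
  have hxe : x * x.ker.starProjection = 0 := by
    ext ξ
    exact (x.ker.starProjection_apply_mem ξ :)
  have hex : x.ker.starProjection * x = 0 := by
    simpa [he.isSelfAdjoint.star_eq, hx.star_eq] using congrArg star hxe
  have he0 :=
    h _ (starProjection_ker_mem hxM) ⟨he.isSelfAdjoint.star_eq, he.isIdempotentElem.eq⟩ hex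
  rw [← x.ker.range_starProjection, he0]
  exact LinearMap.range_zero

theorem exists_mem_mul_eq_of_norm_le {x r : K →L[ℂ] K} (hxM : x ∈ M) (hrM : r ∈ M)
    (hx : DenseRange x) (hr : ∀ ξ, ‖r ξ‖ ≤ ‖x ξ‖) : ∃ q ∈ M, q * x = r := by
  set q : K →L[ℂ] K := (r : K →ₗ[ℂ] K).extendOfNorm (x : K →ₗ[ℂ] K)
  have hq : q * x = r := by
    ext ξ
    exact LinearMap.extendOfNorm_eq hx ⟨1, by simpa using hr⟩ ξ
  refine ⟨q, ?_, hq⟩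
  rw [← M.commutant_commutant, mem_commutant_iff]
  intro y hy
  have hyx := mem_commutant_iff.mp hy x hxM
  have hyr := mem_commutant_iff.mp hy r hrM
  refine cancel_right_of_denseRange hx ?_
  calc y * q * x = y * r := by rw [mul_assoc, hq]
    _ = r * y := hyr.symm
    _ = q * (x * y) := by rw [← mul_assoc, hq]
    _ = q * y * x := by rw [hyx, mul_assoc]

theorem isProj_fin_two_of_mul_eq (hcomm : ∀ x ∈ M, ∀ y ∈ M, x * y = y * x)
    {x a b p₁ p p₂ : K →L[ℂ] K} (haM : a ∈ M) (hbM : b ∈ M)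
    (hp₁M : p₁ ∈ M) (hpM : p ∈ M) (hp₂M : p₂ ∈ M) (hx : IsLeftRegular x)
    (ha : IsSelfAdjoint a) (hb : IsSelfAdjoint b) (hxab : x = a * a + b * b)
    (h₁ : x * p₁ = a * a) (h : x * p = a * b) (h₂ : x * p₂ = b * b) :
    IsProj !![p₁, p; p, p₂] := by
  let _ : CommRing M :=
    { (inferInstance : Ring M) with mul_comm := fun u v => Subtype.ext (hcomm _ u.2 _ v.2) }
  have hxM : x ∈ M := hxab ▸ add_mem (mul_mem haM haM) (mul_mem hbM hbM)
  have hP := IsLeftRegular.isProj_fin_two_of_mul_eq (x := ⟨x, hxM⟩) (a := ⟨a, haM⟩)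
    (b := ⟨b, hbM⟩) (p₁ := ⟨p₁, hp₁M⟩) (p := ⟨p, hpM⟩) (p₂ := ⟨p₂, hp₂M⟩)
    (fun u v huv => Subtype.ext (hx (congrArg Subtype.val huv :))) (Subtype.ext ha.star_eq)
    (Subtype.ext hb.star_eq) (Subtype.ext hxab) (Subtype.ext h₁) (Subtype.ext h) (Subtype.ext h₂)
  convert hP.matrix_map M.toStarSubalgebra.subtype using 1
  ext i j
  fin_cases i <;> fin_cases j <;> rfl

theorem strictIn_of_mul_eq (hcomm : ∀ x ∈ M, ∀ y ∈ M, x * y = y * x)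
    {x a b p₁ p₂ : K →L[ℂ] K} (hp₂M : p₂ ∈ M) (ha : IsSelfAdjoint a)
    (hb : IsSelfAdjoint b) (ha₀ : ∀ q ∈ M, IsProj q → q * a = 0 → q = 0)
    (hb₀ : ∀ q ∈ M, IsProj q → q * b = 0 → q = 0) (h₁ : p₁ * x = a * a) (h₂ : p₂ * x = b * b)
    (hp₂ : 0 ≤ p₂) (hsum : p₁ + p₂ = 1) : StrictIn M p₁ := by
  refine ⟨fun q hqM hq hle => hb₀ q hqM hq ?_, fun q hqM hq hq₁ => ha₀ q hqM hq ?_⟩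
  · have hq₂ : q * p₂ = 0 := hq.mul_eq_zero_of_le_one_sub hp₂ (hcomm q hqM p₂ hp₂M)
      (by rwa [← hsum, add_sub_cancel_right])
    refine mul_eq_zero_of_mul_mul_self_eq_zero hb ?_
    rw [← h₂, ← mul_assoc, hq₂, zero_mul]
  · refine mul_eq_zero_of_mul_mul_self_eq_zero ha ?_
    rw [← h₁, ← mul_assoc, hq₁, zero_mul]

end VonNeumannAlgebra

open ContinuousLinearMap VonNeumannAlgebra

theorem statement11_general (M₀ : VonNeumannAlgebra K)
    (hcomm : ∀ x ∈ M₀, ∀ y ∈ M₀, x * y = y * x)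
    {a₀ b₀ : K →L[ℂ] K} (ha₀M : a₀ ∈ M₀) (hb₀M : b₀ ∈ M₀)
    (ha₀ : StrictPos M₀ a₀) (hb₀ : StrictPos M₀ b₀)
    {x₀ : K →L[ℂ] K} (hx₀ : x₀ = a₀ * a₀ + b₀ * b₀)
    (hstrict : StrictIn M₀ x₀) :
    ∃ P : Matrix (Fin 2) (Fin 2) (K →L[ℂ] K), IsStrictProjMat M₀ P ∧
      !![a₀ * a₀, a₀ * b₀; a₀ * b₀, b₀ * b₀] = !![x₀, 0; 0, x₀] * P ∧
      !![a₀ * a₀, a₀ * b₀; a₀ * b₀, 1 - a₀ * a₀]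
        = !![1 - x₀, 0; 0, 1 - x₀] * !![(0 : K →L[ℂ] K), 0; 0, 1]
          + !![x₀, 0; 0, x₀] * P ∧
      !![b₀ * b₀, -(a₀ * b₀); -(a₀ * b₀), 1 - b₀ * b₀]
        = !![1 - x₀, 0; 0, 1 - x₀] * !![(0 : K →L[ℂ] K), 0; 0, 1]
          + !![x₀, 0; 0, x₀] * (1 - P) := by
  have ha : IsSelfAdjoint a₀ := .of_nonneg ha₀.1
  have hb : IsSelfAdjoint b₀ := .of_nonneg hb₀.1
  have hxM : x₀ ∈ M₀ := hx₀ ▸ add_mem (mul_mem ha₀M ha₀M) (mul_mem hb₀M hb₀M)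
  have hx : IsSelfAdjoint x₀ := .of_nonneg (hx₀ ▸ add_nonneg ha.mul_self_nonneg hb.mul_self_nonneg)
  have hker := ker_eq_bot_of_forall_isProj hxM hx hstrict.2
  have hdense := hx.denseRange_of_ker_eq_bot hker
  have hreg := isLeftRegular_of_ker_eq_bot hker
  have haa : a₀ * a₀ ≤ x₀ := hx₀ ▸ le_add_of_nonneg_right hb.mul_self_nonneg
  have hbb : b₀ * b₀ ≤ x₀ := hx₀ ▸ le_add_of_nonneg_left ha.mul_self_nonneg
  have hax : Commute a₀ x₀ := hcomm _ ha₀M _ hxM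
  have hbx : Commute b₀ x₀ := hcomm _ hb₀M _ hxM
  obtain ⟨p₁, hp₁M, hp₁x⟩ := exists_mem_mul_eq_of_norm_le hxM (mul_mem ha₀M ha₀M) hdense
    (norm_mul_self_apply_le ha hax haa)
  obtain ⟨p, hpM, hpx⟩ := exists_mem_mul_eq_of_norm_le hxM (mul_mem ha₀M hb₀M) hdense
    (norm_mul_apply_le ha hb hbx haa hbb)
  obtain ⟨p₂, hp₂M, hp₂x⟩ := exists_mem_mul_eq_of_norm_le hxM (mul_mem hb₀M hb₀M) hdense
    (norm_mul_self_apply_le hb hbx hbb)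
  have h₁ : x₀ * p₁ = a₀ * a₀ := hcomm _ hxM _ hp₁M ▸ hp₁x
  have h : x₀ * p = a₀ * b₀ := hcomm _ hxM _ hpM ▸ hpx
  have h₂ : x₀ * p₂ = b₀ * b₀ := hcomm _ hxM _ hp₂M ▸ hp₂x
  have hsum : p₁ + p₂ = 1 := hreg (show x₀ * (p₁ + p₂) = x₀ * 1 by
    rw [mul_add, h₁, h₂, mul_one, hx₀])
  have hP : IsProj !![p₁, p; p, p₂] :=
    isProj_fin_two_of_mul_eq hcomm ha₀M hb₀M hp₁M hpM hp₂M hreg ha hb hx₀ h₁ h h₂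
  have hp₂ : 0 ≤ p₂ := hP.diag_nonneg 1
  have hp₁ : StrictPos M₀ p₁ := ⟨hP.diag_nonneg 0, hsum ▸ le_add_of_nonneg_right hp₂,
    strictIn_of_mul_eq hcomm hp₂M ha hb ha₀.2.2.2 hb₀.2.2.2 hp₁x hp₂x hp₂ hsum⟩
  refine ⟨!![p₁, p; p, p₂], ⟨?_, hP, hp₁, hsum⟩, fin_two_decompositions_of_mul_eq hx₀ h₁ h h₂⟩
  intro i j
  fin_cases i <;> fin_cases j <;> assumption

/-- core of Theorem 10: for strict positive elements `a₀, b₀` of a commutative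
von Neumann algebra `M₀` with `x₀ := a₀² + b₀² ≤ 1` strict, there is a strict projection `P`
in `M₂(M₀)` with `[[a₀², a₀b₀],[a₀b₀, b₀²]] = (x₀ ⊗ I₂) P`, and consequently
`[[a₀², a₀b₀],[a₀b₀, 1 - a₀²]] = ((1 - x₀) ⊗ I₂) P₀ + (x₀ ⊗ I₂) P` and
`[[b₀², -a₀b₀],[-a₀b₀, 1 - b₀²]] = ((1 - x₀) ⊗ I₂) P₀ + (x₀ ⊗ I₂)(I₂ - P)`. -/
theorem statement11 (M₀ : VonNeumannAlgebra K)
    (hcomm : ∀ x ∈ M₀, ∀ y ∈ M₀, x * y = y * x)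
    {a₀ b₀ : K →L[ℂ] K} (ha₀M : a₀ ∈ M₀) (hb₀M : b₀ ∈ M₀)
    (ha₀ : StrictPos M₀ a₀) (hb₀ : StrictPos M₀ b₀)
    {x₀ : K →L[ℂ] K} (hx₀ : x₀ = a₀ * a₀ + b₀ * b₀)
    (hle : x₀ ≤ 1) (hstrict : StrictIn M₀ x₀) :
    ∃ P : Matrix (Fin 2) (Fin 2) (K →L[ℂ] K), IsStrictProjMat M₀ P ∧
      !![a₀ * a₀, a₀ * b₀; a₀ * b₀, b₀ * b₀] = !![x₀, 0; 0, x₀] * P ∧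
      !![a₀ * a₀, a₀ * b₀; a₀ * b₀, 1 - a₀ * a₀]
        = !![1 - x₀, 0; 0, 1 - x₀] * !![(0 : K →L[ℂ] K), 0; 0, 1]
          + !![x₀, 0; 0, x₀] * P ∧
      !![b₀ * b₀, -(a₀ * b₀); -(a₀ * b₀), 1 - b₀ * b₀]
        = !![1 - x₀, 0; 0, 1 - x₀] * !![(0 : K →L[ℂ] K), 0; 0, 1]
          + !![x₀, 0; 0, x₀] * (1 - P) :=
  statement11_general M₀ hcomm ha₀M hb₀M ha₀ hb₀ hx₀ hstrict
end
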